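/- arXiv:2507.20400 — 6 statements merged into one kernel-verified Lean document; each statement's English description precedes it below -/
import Mathlib

section
/- If g : ℝ^n → ℝ is differentiable, L-smooth (gradient L-Lipschitz) and satisfies the Polyak-Łojasiewicz condition with constant μ > 0 (i.e., ‖∇g(y)‖² ≥ 2μ(g(y) - inf g)), then g satisfies the quadratic growth condition with the same constant: g(y) - inf g ≥ (μ/2)·d(y, S)² for all y, where S is the set of minimizers of g. -/
open Real InnerProductSpace

variable {E : Type*} [NormedAddCommGroup E] [InnerProductSpace ℝ E] [CompleteSpace E]

-- derivative along a line
lemma deriv_line (g : E → ℝ) (hdiff : Differentiable ℝ g) (x v : E) (t : ℝ) :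
    HasDerivAt (fun s : ℝ => g (x + s • v)) ⟪gradient g (x + t • v), v⟫_ℝ t := by
  have hc : HasDerivAt (fun s : ℝ => x + s • v) v t := by
    simpa using ((hasDerivAt_id t).smul_const v).const_add x
  have hg := (hdiff (x + t • v)).hasGradientAt
  have := hg.hasFDerivAt.comp_hasDerivAt t hc
  rw [InnerProductSpace.toDual_apply_apply] at this; exact this

lemma smooth_ub (g : E → ℝ) (L : ℝ) (hL : 0 < L) (hdiff : Differentiable ℝ g)
    (hlip : ∀ y z, ‖gradient g y - gradient g z‖ ≤ L * ‖y - z‖) (x v : E) :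
    g (x + v) ≤ g x + ⟪gradient g x, v⟫_ℝ + L / 2 * ‖v‖ ^ 2 := by
  set ψ : ℝ → ℝ := fun t => g (x + t • v) - t * ⟪gradient g x, v⟫_ℝ - L * t ^ 2 / 2 * ‖v‖ ^ 2 with hψ
  have hder : ∀ t : ℝ, HasDerivAt ψ
      (⟪gradient g (x + t • v), v⟫_ℝ - ⟪gradient g x, v⟫_ℝ - L * t * ‖v‖ ^ 2) t := by
    intro t
    have h1 := deriv_line g hdiff x v t
    have h2 : HasDerivAt (fun s : ℝ => s * ⟪gradient g x, v⟫_ℝ) ⟪gradient g x, v⟫_ℝ t := by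
      simpa using (hasDerivAt_id t).mul_const ⟪gradient g x, v⟫_ℝ
    have h3 : HasDerivAt (fun s : ℝ => L * s ^ 2 / 2 * ‖v‖ ^ 2) (L * t * ‖v‖ ^ 2) t := by
      have : HasDerivAt (fun s : ℝ => s ^ 2) (2 * t) t := by
        simpa using hasDerivAt_pow 2 t
      have := ((this.const_mul L).div_const 2).mul_const (‖v‖ ^ 2)
      exact this.congr_deriv (by ring)
    exact (h1.sub h2).sub h3
  have hmono : AntitoneOn ψ (Set.Icc 0 1) := by
    apply antitoneOn_of_deriv_nonpos (convex_Icc 0 1)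
    · exact fun t _ => ((hder t).continuousAt).continuousWithinAt
    · intro t ht
      rw [interior_Icc] at ht
      exact (hder t).differentiableAt.differentiableWithinAt
    · intro t ht
      rw [interior_Icc] at ht
      rw [(hder t).deriv]
      have h1 : ⟪gradient g (x + t • v) - gradient g x, v⟫_ℝ ≤
          ‖gradient g (x + t • v) - gradient g x‖ * ‖v‖ := real_inner_le_norm _ _
      have h2 : ‖gradient g (x + t • v) - gradient g x‖ ≤ L * ‖t • v‖ := by
        simpa using hlip (x + t • v) x
      have h3 : ‖t • v‖ = t * ‖v‖ := by
        rw [norm_smul, Real.norm_eq_abs, abs_of_pos ht.1]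
      rw [inner_sub_left] at h1
      rw [h3] at h2
      have h4 := mul_le_mul_of_nonneg_right h2 (norm_nonneg v)
      nlinarith [norm_nonneg v, ht.1.le, sq_nonneg (‖v‖)]
  have := hmono (Set.left_mem_Icc.2 zero_le_one) (Set.right_mem_Icc.2 zero_le_one) zero_le_one
  simp only [hψ, zero_smul, add_zero, one_smul, zero_mul, one_mul, zero_pow, mul_zero,
    zero_div, sub_zero, one_pow] at this
  nlinarith [this]

noncomputable def gdSeq (g : E → ℝ) (η : ℝ) (y : E) : ℕ → E
  | 0 => y
  | (k+1) => gdSeq g η y k - η • gradient g (gdSeq g η y k)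

lemma key_step (g : E → ℝ) (L μ : ℝ) (hL : 0 < L) (hμ : 0 < μ)
    (hdiff : Differentiable ℝ g)
    (hlip : ∀ y z, ‖gradient g y - gradient g z‖ ≤ L * ‖y - z‖)
    (ystar : E) (hmin : ∀ y, g ystar ≤ g y)
    (hPL : ∀ y, ‖gradient g y‖ ^ 2 ≥ 2 * μ * (g y - g ystar))
    (η : ℝ) (hη0 : 0 < η) (hη1 : η * L ≤ 1) (hη2 : 2 * μ * η ≤ 1) (y : E) :
    μ / 2 * (1 - L * η / 2) ^ 2 * (Metric.infDist y {z | ∀ w, g z ≤ g w}) ^ 2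
      ≤ g y - g ystar := by
  set S := {z : E | ∀ w, g z ≤ g w} with hS
  set x : ℕ → E := gdSeq g η y with hx
  have hx0 : x 0 = y := rfl
  have hxs : ∀ k, x (k+1) = x k - η • gradient g (x k) := fun k => rfl
  set Δ : ℕ → ℝ := fun k => g (x k) - g ystar with hΔdef
  set h : ℕ → ℝ := fun k => Real.sqrt (Δ k) with hhdef
  set q := Real.sqrt (μ/2) with hqdef
  have hq0 : 0 < q := Real.sqrt_pos.2 (by positivity)
  have hq2 : q ^ 2 = μ/2 := Real.sq_sqrt (by positivity)
  have hfac : (0:ℝ) < 1 - L * η / 2 := by nlinarith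
  set c := (1 - L * η / 2) * q with hc
  have hc0 : 0 < c := mul_pos hfac hq0
  set r := 1 - 2*μ*η*(1 - L*η/2) with hr
  clear_value S x Δ h q c r
  have hΔ0 : ∀ k, 0 ≤ Δ k := by
    intro k; rw [hΔdef]; exact sub_nonneg.2 (hmin _)
  have hA : ∀ k, Δ (k+1) ≤ Δ k - η*(1 - L*η/2)*‖gradient g (x k)‖^2 := by
    intro k
    have hub := smooth_ub g L hL hdiff hlip (x k) (-(η • gradient g (x k)))
    have hx1 : x (k+1) = x k + -(η • gradient g (x k)) := by
      rw [hxs k, sub_eq_add_neg]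
    rw [← hx1, inner_neg_right, inner_smul_right, real_inner_self_eq_norm_sq,
      norm_neg, norm_smul, Real.norm_eq_abs, abs_of_pos hη0] at hub
    simp only [hΔdef]
    nlinarith [hub]
  have hstep : ∀ k, dist (x k) (x (k+1)) = η * ‖gradient g (x k)‖ := by
    intro k
    rw [dist_eq_norm, hxs k]
    simp [norm_smul, abs_of_pos hη0]
  have hmono : ∀ k, Δ (k+1) ≤ Δ k := by
    intro k
    have h1 := hA k
    have h2 : 0 ≤ η*(1 - L*η/2)*‖gradient g (x k)‖^2 :=
      mul_nonneg (mul_nonneg hη0.le hfac.le) (sq_nonneg _)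
    linarith
  have hsq : ∀ k, (h k)^2 = Δ k := by
    intro k; rw [hhdef]; exact Real.sq_sqrt (hΔ0 k)
  have hhnn : ∀ k, 0 ≤ h k := by intro k; rw [hhdef]; exact Real.sqrt_nonneg _
  have hhmono : ∀ k, h (k+1) ≤ h k := by
    intro k; rw [hhdef]; exact Real.sqrt_le_sqrt (hmono k)
  have hanti : Antitone h := antitone_nat_of_succ_le hhmono
  have hPLk : ∀ k, 2*μ*(Δ k) ≤ ‖gradient g (x k)‖^2 := by
    intro k; rw [hΔdef]; exact hPL (x k)
  have hD : ∀ k, c * dist (x k) (x (k+1)) ≤ h k - h (k+1) := by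
    intro k
    rw [hstep k, hc]
    rcases eq_or_lt_of_le (norm_nonneg (gradient g (x k))) with h0 | h0
    · rw [← h0, mul_zero, mul_zero]
      exact sub_nonneg.2 (hhmono k)
    · have hs2 := hsq k
      have ht2 := hsq (k+1)
      have hA' : η*(1 - L*η/2)*‖gradient g (x k)‖^2 ≤ (h k)^2 - (h (k+1))^2 := by
        rw [hs2, ht2]; linarith [hA k]
      have hqs : q * (h k + h (k+1)) ≤ ‖gradient g (x k)‖ := by
        have hsum0 : 0 ≤ q * (h k + h (k+1)) :=
          mul_nonneg hq0.le (by linarith [hhnn k, hhnn (k+1)])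
        have h1 : (q * (h k + h (k+1)))^2 ≤ ‖gradient g (x k)‖^2 := by
          have e2 : (h k + h (k+1))^2 ≤ 4 * (h k)^2 := by
            nlinarith [hhmono k, hhnn (k+1), hhnn k]
          calc (q * (h k + h (k+1)))^2 = q^2 * (h k + h (k+1))^2 := by ring
            _ ≤ q^2 * (4 * (h k)^2) := mul_le_mul_of_nonneg_left e2 (sq_nonneg q)
            _ = 2*μ*(Δ k) := by rw [hq2, hs2]; ring
            _ ≤ ‖gradient g (x k)‖^2 := hPLk k
        calc q * (h k + h (k+1)) = Real.sqrt ((q * (h k + h (k+1)))^2) :=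
              (Real.sqrt_sq hsum0).symm
          _ ≤ Real.sqrt (‖gradient g (x k)‖^2) := Real.sqrt_le_sqrt h1
          _ = ‖gradient g (x k)‖ := Real.sqrt_sq (norm_nonneg _)
      have hdnn : 0 ≤ h k - h (k+1) := sub_nonneg.2 (hhmono k)
      have key := mul_le_mul_of_nonneg_left hqs hdnn
      have m1 := mul_le_mul_of_nonneg_left hA' hq0.le
      rw [← mul_le_mul_iff_of_pos_right h0]
      nlinarith [key, m1]
  have hF : ∀ N M, N ≤ M → c * dist (x N) (x M) ≤ h N - h M := by
    intro N M hNM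
    calc c * dist (x N) (x M)
        ≤ c * ∑ i ∈ Finset.Ico N M, dist (x i) (x (i+1)) :=
          mul_le_mul_of_nonneg_left (dist_le_Ico_sum_dist x hNM) hc0.le
      _ = ∑ i ∈ Finset.Ico N M, c * dist (x i) (x (i+1)) := Finset.mul_sum _ _ _
      _ ≤ ∑ i ∈ Finset.Ico N M, (h i - h (i+1)) := Finset.sum_le_sum (fun i _ => hD i)
      _ = h N - h M := by
          rw [Finset.sum_Ico_eq_sub _ hNM, Finset.sum_range_sub' h, Finset.sum_range_sub' h]
          ring
  have hr0 : 0 ≤ r := by rw [hr]; nlinarith only [hη1, hη2, hμ, hη0, hL, hfac]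
  have hr1 : r < 1 := by rw [hr]; nlinarith only [mul_pos (mul_pos hμ hη0) hfac]
  have hE : ∀ k, Δ (k+1) ≤ r * Δ k := by
    intro k
    have h1 := hA k
    have h2 := hPLk k
    have h3 := hΔ0 k
    have h4 : 0 ≤ η * (1 - L*η/2) := mul_nonneg hη0.le hfac.le
    rw [hr]
    linarith only [h1, mul_le_mul_of_nonneg_left h2 h4]
  have hgeo : ∀ N, Δ N ≤ r^N * Δ 0 := by
    intro N
    induction N with
    | zero => simp
    | succ k ih =>
        calc Δ (k+1) ≤ r * Δ k := hE k
          _ ≤ r * (r^k * Δ 0) := mul_le_mul_of_nonneg_left ih hr0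
          _ = r^(k+1) * Δ 0 := by ring
  have hΔtend : Filter.Tendsto Δ Filter.atTop (nhds 0) := by
    have hgt : Filter.Tendsto (fun N => r^N * Δ 0) Filter.atTop (nhds 0) := by
      simpa using (tendsto_pow_atTop_nhds_zero_of_lt_one hr0 hr1).mul_const (Δ 0)
    exact squeeze_zero hΔ0 hgeo hgt
  have hhtend : Filter.Tendsto h Filter.atTop (nhds 0) := by
    have h1 := (Real.continuous_sqrt.tendsto 0).comp hΔtend
    rw [hhdef]
    rw [Real.sqrt_zero] at h1; exact h1
  have hcauchy : CauchySeq x := by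
    apply cauchySeq_of_le_tendsto_0 (fun N => h N / c) _ (by simpa using hhtend.div_const c)
    intro n m N hn hm
    have key : ∀ a b : ℕ, N ≤ a → a ≤ b → dist (x a) (x b) ≤ h N / c := by
      intro a b ha hab
      rw [le_div_iff₀ hc0]
      calc dist (x a) (x b) * c = c * dist (x a) (x b) := mul_comm _ _
        _ ≤ h a - h b := hF a b hab
        _ ≤ h N := by linarith [hanti ha, hhnn b]
    rcases le_total n m with hnm | hnm
    · exact key n m hn hnm
    · rw [dist_comm]; exact key m n hm hnm
  obtain ⟨z, hz⟩ := cauchySeq_tendsto_of_complete hcauchy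
  have hgz : g z = g ystar := by
    have h1 : Filter.Tendsto (fun N => g (x N)) Filter.atTop (nhds (g z)) :=
      (hdiff.continuous.tendsto z).comp hz
    have h2 : Filter.Tendsto (fun N => g (x N)) Filter.atTop (nhds (g ystar)) := by
      have h3 := hΔtend.add_const (g ystar)
      rw [hΔdef] at h3
      simpa using h3
    exact tendsto_nhds_unique h1 h2
  have hzS : z ∈ S := by
    rw [hS]
    exact fun w => hgz ▸ hmin w
  have hyz : c * dist y z ≤ h 0 := by
    have h1 : Filter.Tendsto (fun N => c * dist (x 0) (x N)) Filter.atTop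
        (nhds (c * dist (x 0) z)) :=
      ((Filter.Tendsto.dist tendsto_const_nhds hz)).const_mul c
    have h2 : ∀ N, c * dist (x 0) (x N) ≤ h 0 := fun N =>
      le_trans (hF 0 N (Nat.zero_le N)) (by linarith [hhnn N])
    have h3 := le_of_tendsto h1 (Filter.Eventually.of_forall h2)
    rwa [hx0] at h3
  have hdistS : Metric.infDist y S ≤ dist y z := Metric.infDist_le_dist_of_mem hzS
  have hd0 : 0 ≤ Metric.infDist y S := Metric.infDist_nonneg
  have h5 : c * Metric.infDist y S ≤ h 0 :=
    le_trans (mul_le_mul_of_nonneg_left hdistS hc0.le) hyz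
  have h6 : (c * Metric.infDist y S)^2 ≤ Δ 0 := by
    nlinarith only [h5, hsq 0, mul_nonneg hc0.le hd0, hhnn 0]
  have hΔ0y : Δ 0 = g y - g ystar := by simp only [hΔdef, hx0]
  rw [hc] at h6
  rw [show ((1 - L*η/2)*q*Metric.infDist y S)^2
      = (1 - L*η/2)^2*q^2*(Metric.infDist y S)^2 from by ring, hq2] at h6
  linarith only [h6, hΔ0y]

theorem quadratic_growth_of_PL (n : ℕ) (g : EuclideanSpace ℝ (Fin n) → ℝ)
    (L μ : ℝ) (hL : 0 < L) (hμ : 0 < μ)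
    (hdiff : Differentiable ℝ g)
    (hlip : ∀ y z, ‖gradient g y - gradient g z‖ ≤ L * ‖y - z‖)
    (ystar : EuclideanSpace ℝ (Fin n)) (hmin : ∀ y, g ystar ≤ g y)
    (hPL : ∀ y, ‖gradient g y‖ ^ 2 ≥ 2 * μ * (g y - g ystar)) :
    ∀ y, g y - g ystar ≥ μ / 2 * (Metric.infDist y {z | ∀ w, g z ≤ g w}) ^ 2 := by
  intro y
  rw [ge_iff_le]
  set d := Metric.infDist y {z | ∀ w, g z ≤ g w} with hd
  have hkey : ∀ η : ℝ, 0 < η → η * L ≤ 1 → 2*μ*η ≤ 1 →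
      μ/2*(1 - L*η/2)^2*d^2 ≤ g y - g ystar := fun η a b c =>
    key_step g L μ hL hμ hdiff hlip ystar hmin hPL η a b c y
  have hne : (nhdsWithin (0:ℝ) (Set.Ioi 0)).NeBot := by infer_instance
  have htend : Filter.Tendsto (fun η : ℝ => μ/2*(1 - L*η/2)^2*d^2)
      (nhdsWithin 0 (Set.Ioi 0)) (nhds (μ/2*d^2)) := by
    have hcont : Continuous (fun η : ℝ => μ/2*(1 - L*η/2)^2*d^2) := by continuity
    have h2 : Filter.Tendsto (fun η : ℝ => μ/2*(1 - L*η/2)^2*d^2)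
        (nhdsWithin 0 (Set.Ioi 0)) (nhds (μ/2*(1 - L*0/2)^2*d^2)) :=
      (hcont.tendsto 0).mono_left nhdsWithin_le_nhds
    simpa using h2
  apply le_of_tendsto htend
  have hη0 : (0:ℝ) < min (1/L) (1/(2*μ)) :=
    lt_min (by positivity) (by positivity)
  filter_upwards [Ioc_mem_nhdsGT_of_mem (Set.mem_Ico.2 ⟨le_refl 0, hη0⟩)] with η hη
  obtain ⟨hη1, hη2⟩ := hη
  refine hkey η hη1 ?_ ?_
  · have := le_trans hη2 (min_le_left _ _)
    rw [le_div_iff₀ hL] at this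
    linarith
  · have := le_trans hη2 (min_le_right _ _)
    rw [le_div_iff₀ (by positivity)] at this
    linarith
end

section
/- If g : ℝ^n → ℝ is differentiable and satisfies the error bound condition ‖∇g(y)‖ ≥ μ·d(y, S) for all y with μ > 0 and g is L-smooth, then g satisfies the PL condition with constant μ²/(2L), i.e., ‖∇g(y)‖² ≥ (μ²/L)(g(y) - inf g). -/
theorem PL_of_error_bound (n : ℕ) (g : EuclideanSpace ℝ (Fin n) → ℝ)
    (L μ : ℝ) (hL : 0 < L) (hμ : 0 < μ)
    (hdiff : Differentiable ℝ g)
    (hlip : ∀ y z, ‖gradient g y - gradient g z‖ ≤ L * ‖y - z‖)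
    (ystar : EuclideanSpace ℝ (Fin n)) (hmin : ∀ y, g ystar ≤ g y)
    (hEB : ∀ y, ‖gradient g y‖ ≥ μ * Metric.infDist y {z | ∀ w, g z ≤ g w}) :
    ∀ y, ‖gradient g y‖ ^ 2 ≥ (μ ^ 2 / L) * (g y - g ystar) := by
  intro y
  set S : Set (EuclideanSpace ℝ (Fin n)) := {z | ∀ w, g z ≤ g w} with hS
  have hSne : S.Nonempty := ⟨ystar, hmin⟩
  have hSclosed : IsClosed S := by
    have : S = ⋂ w, {z | g z ≤ g w} := by ext z; simp [hS]
    rw [this]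
    exact isClosed_iInter fun w =>
      isClosed_le hdiff.continuous continuous_const
  obtain ⟨z, hzS, hzd⟩ := hSclosed.exists_infDist_eq_dist hSne y
  -- gradient at z is zero
  have hgradz : gradient g z = 0 := by
    have hloc : IsLocalMin g z := (isMinOn_univ_iff.2 hzS).isLocalMin Filter.univ_mem
    have : fderiv ℝ g z = 0 := hloc.fderiv_eq_zero
    simp [gradient, this]
  -- quadratic upper bound : g y - g z ≤ L * ‖y - z‖^2
  have key : g y - g z ≤ L * ‖y - z‖ ^ 2 := by
    have hbound : ∀ x ∈ segment ℝ z y, ‖fderiv ℝ g x‖ ≤ L * ‖y - z‖ := by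
      intro x hx
      have h1 : ‖fderiv ℝ g x‖ = ‖gradient g x‖ := by
        rw [gradient]
        simp [LinearIsometryEquiv.norm_map]
      have h2 : ‖gradient g x‖ = ‖gradient g x - gradient g z‖ := by
        rw [hgradz, sub_zero]
      have h3 : ‖x - z‖ ≤ ‖y - z‖ := by
        have := dist_add_dist_of_mem_segment hx
        have hd : dist z x ≤ dist z y := by linarith [dist_nonneg (x := x) (y := y)]
        rw [dist_eq_norm] at hd
        rw [dist_comm, dist_eq_norm] at hd
        rwa [← norm_neg (z - x), neg_sub] at hd
      calc ‖fderiv ℝ g x‖ = ‖gradient g x - gradient g z‖ := by rw [h1, h2]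
        _ ≤ L * ‖x - z‖ := hlip x z
        _ ≤ L * ‖y - z‖ := by nlinarith
    have := (convex_segment z y).norm_image_sub_le_of_norm_fderiv_le
      (fun x _ => hdiff x) hbound (left_mem_segment ℝ z y) (right_mem_segment ℝ z y)
    have h4 : g y - g z ≤ |g y - g z| := le_abs_self _
    rw [Real.norm_eq_abs] at this
    nlinarith [norm_nonneg (y - z)]
  have hd : Metric.infDist y S = ‖y - z‖ := by rw [hzd, dist_eq_norm]
  have hEBy := hEB y
  rw [hd] at hEBy
  have hgz : g z = g ystar := le_antisymm (hzS ystar) (hmin z)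
  have hnn : 0 ≤ ‖y - z‖ := norm_nonneg _
  have h5 : ‖gradient g y‖ ^ 2 ≥ μ ^ 2 * ‖y - z‖ ^ 2 := by
    nlinarith [norm_nonneg (gradient g y), mul_nonneg hμ.le hnn]
  rw [ge_iff_le, div_mul_eq_mul_div, div_le_iff₀ hL]
  calc μ ^ 2 * (g y - g ystar) ≤ μ ^ 2 * (L * ‖y - z‖ ^ 2) := by
        rw [← hgz] at *; nlinarith
    _ ≤ ‖gradient g y‖ ^ 2 * L := by nlinarith
end

section
/- Let g : ℝ^m → ℝ satisfy quadratic growth with constant μ > 0 around its minimizer set S_g, and let f : ℝ^m → ℝ satisfy the (δ,α)-flatness condition at every y_g ∈ S_g with modulus c ≥ 0 and α ∈ (1,2): |f(y_g) − f(y)| ≤ c‖y_g − y‖^α + δ for all y. Then for any γ > 0, the penalty gap satisfies min_y f(y) over S_g minus min_y (f(y) + γ(g(y) − min g)) is at most c^(2/(2−α))·(2α)^(α/(2−α))·(1 − α/2)·(μγ)^(−α/(2−α)) + δ. -/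
open Real Filter

lemma penalty_key_bound {c M α : ℝ} (hc : 0 ≤ c) (hM : 0 < M) (h1 : 1 < α) (h2 : α < 2)
    {t : ℝ} (ht : 0 ≤ t) :
    c * t ^ α ≤ M / 2 * t ^ 2 +
      c ^ (2 / (2 - α)) * (2 * α) ^ (α / (2 - α)) * (1 - α / 2) * M ^ (-(α / (2 - α))) := by
  have hα0 : (0:ℝ) < α := lt_trans one_pos h1
  have h2a : (0:ℝ) < 2 - α := by linarith
  set β := α / (2 - α) with hβ
  have hβ0 : 0 ≤ β := le_of_lt (div_pos hα0 h2a)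
  have hpq : (2/α).HolderConjugate (2/(2-α)) := by
    rw [Real.holderConjugate_iff]
    constructor
    · rw [lt_div_iff₀ hα0]; linarith
    · field_simp; ring
  have hMα : 0 < M / α := div_pos hM hα0
  set A := (M / α) ^ (α/2 : ℝ) with hA
  have hA0 : 0 < A := Real.rpow_pos_of_pos hMα _
  have hxy : (A * t ^ α) * (c / A) = c * t ^ α := by field_simp
  have hyoung := Real.young_inequality_of_nonneg
    (mul_nonneg hA0.le (Real.rpow_nonneg ht α)) (div_nonneg hc hA0.le) hpq
  have hxp : (A * t ^ α) ^ (2/α : ℝ) / (2/α) = M/2 * t^2 := by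
    rw [Real.mul_rpow hA0.le (Real.rpow_nonneg ht α), hA,
      ← Real.rpow_natCast t 2, ← Real.rpow_mul hMα.le, ← Real.rpow_mul ht]
    have e1 : (α/2) * (2/α) = 1 := by field_simp
    have e2 : α * (2/α) = ((2:ℕ):ℝ) := by push_cast; field_simp
    rw [e1, e2, Real.rpow_one]
    field_simp
  have hyq : (c / A) ^ (2/(2-α) : ℝ) / (2/(2-α)) ≤
      c ^ (2/(2-α)) * (2*α) ^ β * (1 - α/2) * M ^ (-β) := by
    have hAq : A ^ (2/(2-α) : ℝ) = M ^ β / α ^ β := by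
      rw [hA, ← Real.rpow_mul hMα.le]
      have e3 : (α/2) * (2/(2-α)) = β := by rw [hβ]; field_simp
      rw [e3, Real.div_rpow hM.le hα0.le]
    rw [Real.div_rpow hc hA0.le, hAq, Real.rpow_neg hM.le]
    have hcq : 0 ≤ c ^ (2/(2-α):ℝ) := Real.rpow_nonneg hc _
    have hαβ : α ^ β ≤ (2*α) ^ β := Real.rpow_le_rpow hα0.le (by linarith) hβ0
    have hMβ : 0 < M ^ β := Real.rpow_pos_of_pos hM β
    have hαβ0 : 0 < α ^ β := Real.rpow_pos_of_pos hα0 β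
    calc c ^ (2/(2-α):ℝ) / (M ^ β / α ^ β) / (2/(2-α))
        = c ^ (2/(2-α):ℝ) * α ^ β * (1 - α/2) * (M ^ β)⁻¹ := by
          field_simp
      _ ≤ c ^ (2/(2-α):ℝ) * (2*α) ^ β * (1 - α/2) * (M ^ β)⁻¹ := by
          gcongr
          linarith
  calc c * t ^ α = (A * t ^ α) * (c / A) := hxy.symm
    _ ≤ (A * t ^ α) ^ (2/α : ℝ) / (2/α) + (c / A) ^ (2/(2-α) : ℝ) / (2/(2-α)) := hyoung
    _ ≤ M/2 * t^2 + c ^ (2/(2-α)) * (2*α) ^ β * (1 - α/2) * M ^ (-β) := by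
        rw [hxp]; linarith

theorem penalty_gap_under_flatness (m : ℕ) (f g : EuclideanSpace ℝ (Fin m) → ℝ)
    (μ c δ α γ : ℝ) (hμ : 0 < μ) (hc : 0 ≤ c) (hδ : 0 ≤ δ)
    (hα : α ∈ Set.Ioo (1:ℝ) 2) (hγ : 0 < γ)
    (S : Set (EuclideanSpace ℝ (Fin m))) (hS : S = {y | ∀ z, g y ≤ g z})
    (ymin : EuclideanSpace ℝ (Fin m)) (hymin : ymin ∈ S)
    (hQG : ∀ y, g y - g ymin ≥ μ / 2 * (Metric.infDist y S) ^ 2)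
    (hflat : ∀ yg ∈ S, ∀ y, |f yg - f y| ≤ c * ‖yg - y‖ ^ α + δ)
    (ygstar : EuclideanSpace ℝ (Fin m)) (hygS : ygstar ∈ S)
    (hygmin : ∀ z ∈ S, f ygstar ≤ f z)
    (yγ : EuclideanSpace ℝ (Fin m))
    (hyγ : ∀ y, f yγ + γ * (g yγ - g ymin) ≤ f y + γ * (g y - g ymin)) :
    f ygstar - (f yγ + γ * (g yγ - g ymin)) ≤
      c ^ (2 / (2 - α)) * (2 * α) ^ (α / (2 - α)) * (1 - α / 2) *
        (μ * γ) ^ (-(α / (2 - α))) + δ := by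
  obtain ⟨hα1, hα2⟩ := hα
  have hα0 : (0:ℝ) < α := lt_trans one_pos hα1
  have hSne : S.Nonempty := ⟨ymin, hymin⟩
  set d := Metric.infDist yγ S with hd
  have hd0 : 0 ≤ d := Metric.infDist_nonneg
  have hstep2 : f ygstar - f yγ ≤ c * d ^ α + δ := by
    have hseq : ∀ n : ℕ, f ygstar - f yγ ≤ c * (d + 1/(n+1)) ^ α + δ := by
      intro n
      have hn : (0:ℝ) < 1/(n+1) := by positivity
      obtain ⟨yg, hygS', hdist⟩ := (Metric.infDist_lt_iff hSne).mp
        (show d < d + 1/(n+1) by linarith)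
      have h1 := hflat yg hygS' yγ
      have h2 : f ygstar ≤ f yg := hygmin yg hygS'
      have h3 : ‖yg - yγ‖ = dist yγ yg := by rw [dist_eq_norm, norm_sub_rev]
      have h4 : c * ‖yg - yγ‖ ^ α ≤ c * (d + 1/(n+1)) ^ α := by
        apply mul_le_mul_of_nonneg_left _ hc
        exact Real.rpow_le_rpow (norm_nonneg _) (by rw [h3]; linarith) hα0.le
      have h5 := abs_le.mp h1
      linarith [h5.2]
    have htend : Tendsto (fun n : ℕ => c * (d + 1/(n+1)) ^ α + δ) atTop
        (nhds (c * d ^ α + δ)) := by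
      have h1 : Tendsto (fun n : ℕ => d + 1/(n+1 : ℝ)) atTop (nhds d) := by
        have h0 := tendsto_one_div_add_atTop_nhds_zero_nat (𝕜 := ℝ)
        simpa using tendsto_const_nhds.add h0
      have hcont : ContinuousAt (fun x : ℝ => c * x ^ α + δ) d :=
        ((continuousAt_const.mul
          (Real.continuousAt_rpow_const d α (Or.inr hα0.le))).add continuousAt_const)
      exact hcont.tendsto.comp h1
    exact ge_of_tendsto' htend hseq
  have hQ := hQG yγ
  have hγQ : γ * (μ/2 * d^2) ≤ γ * (g yγ - g ymin) := by
    apply mul_le_mul_of_nonneg_left _ hγ.le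
    exact hQ
  have hkey := penalty_key_bound hc (mul_pos hμ hγ) hα1 hα2 hd0
  have hrw : γ * (μ/2 * d^2) = μ * γ / 2 * d^2 := by ring
  linarith
end

section
/- Suppose x ≥ 0 satisfies x^(2−α) ≤ A·γ^(−1) + B·γ^(−1)·x^(−α) with constants A, B ≥ 0, γ > 0, α ∈ (1, 3/2], and that x ≥ √(δ/γ) where B = 2δ/μ for δ ≥ 0 with A = 2c/μ. Then x ≤ 2^((α−1)/(2−α)) · ((2c/μ)^(1/(2−α))·γ^(−1/(2−α)) + (2/μ)^(1/(2−α))·δ^(1/2)·γ^(−1/2)). -/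
open Real

lemma real_rpow_add_le_mul_rpow_add_rpow (a b : ℝ) (ha : 0 ≤ a) (hb : 0 ≤ b) {p : ℝ}
    (hp : 1 ≤ p) : (a + b) ^ p ≤ (2 : ℝ) ^ (p - 1) * (a ^ p + b ^ p) := by
  lift a to NNReal using ha
  lift b to NNReal using hb
  have h := NNReal.rpow_add_le_mul_rpow_add_rpow a b hp
  exact_mod_cast h

theorem distance_bound_from_flat_inequality (c μ δ γ α x : ℝ)
    (hc : 0 < c) (hμ : 0 < μ) (hδ : 0 ≤ δ) (hγ : 0 < γ)
    (hα : 1 < α) (hα' : α ≤ 3 / 2) (hx : 0 ≤ x)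
    (hineq : x ^ (2 - α) ≤ (2 * c / μ) * γ⁻¹ + (2 * δ / μ) * γ⁻¹ * x ^ (-α))
    (hxlb : Real.sqrt (δ / γ) ≤ x) :
    x ≤ 2 ^ ((α - 1) / (2 - α)) *
      ((2 * c / μ) ^ (1 / (2 - α)) * γ ^ (-(1 / (2 - α))) +
        (2 / μ) ^ (1 / (2 - α)) * δ ^ ((1:ℝ) / 2) * γ ^ (-(1:ℝ) / 2)) := by
  have h2α : 0 < 2 - α := by linarith
  set p : ℝ := 1 / (2 - α) with hp_def
  have hp_pos : 0 < p := by positivity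
  have hp1 : 1 ≤ p := by
    rw [hp_def, le_div_iff₀ h2α]; linarith
  rcases hx.eq_or_lt with rfl | hxpos
  · positivity
  -- Step 1: bound the second term
  have hb : (2 * δ / μ) * γ⁻¹ * x ^ (-α) ≤ (2 / μ) * (δ / γ) ^ ((2 - α) / 2) := by
    rcases hδ.eq_or_lt with rfl | hδpos
    · rw [zero_div, Real.zero_rpow (by positivity : ((2:ℝ) - α) / 2 ≠ 0)]
      simp
    · have hdg : 0 < δ / γ := div_pos hδpos hγ
      have hsq : Real.sqrt (δ / γ) = (δ / γ) ^ ((1:ℝ)/2) := Real.sqrt_eq_rpow _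
      have hxa : x ^ (-α) ≤ ((δ / γ) ^ ((1:ℝ)/2)) ^ (-α) := by
        refine Real.rpow_le_rpow_of_nonpos ?_ (hsq ▸ hxlb) (by linarith)
        positivity
      have hexp : ((δ / γ) ^ ((1:ℝ)/2)) ^ (-α) = (δ / γ) ^ (-(α/2)) := by
        rw [← Real.rpow_mul hdg.le]; congr 1; ring
      have hkey : (δ / γ) * (δ / γ) ^ (-(α/2)) = (δ / γ) ^ ((2 - α) / 2) := by
        nth_rewrite 1 [← Real.rpow_one (δ / γ)]
        rw [← Real.rpow_add hdg]; congr 1; ring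
      calc (2 * δ / μ) * γ⁻¹ * x ^ (-α)
          ≤ (2 * δ / μ) * γ⁻¹ * (((δ / γ) ^ ((1:ℝ)/2)) ^ (-α)) := by
            apply mul_le_mul_of_nonneg_left hxa; positivity
        _ = (2 / μ) * ((δ / γ) * (δ / γ) ^ (-(α/2))) := by
            rw [hexp]; field_simp
        _ = (2 / μ) * (δ / γ) ^ ((2 - α) / 2) := by rw [hkey]
  -- Step 2: combined flat inequality
  have h2 : x ^ (2 - α) ≤ (2 * c / μ) * γ⁻¹ + (2 / μ) * (δ / γ) ^ ((2 - α) / 2) :=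
    hineq.trans (add_le_add_right hb _)
  -- Step 3: raise to power p
  have hx_eq : (x ^ (2 - α)) ^ p = x := by
    rw [← Real.rpow_mul hxpos.le, hp_def, mul_one_div, div_self h2α.ne', Real.rpow_one]
  have hA : ((2 * c / μ) * γ⁻¹) ^ p = (2 * c / μ) ^ p * γ ^ (-p) := by
    rw [Real.mul_rpow (by positivity) (by positivity), ← Real.rpow_neg_one γ,
      ← Real.rpow_mul hγ.le, neg_one_mul]
  have hB : ((2 / μ) * (δ / γ) ^ ((2 - α) / 2)) ^ p
      = (2 / μ) ^ p * δ ^ ((1:ℝ)/2) * γ ^ (-(1:ℝ)/2) := by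
    rw [Real.mul_rpow (by positivity) (by positivity), ← Real.rpow_mul (by positivity)]
    have : (2 - α) / 2 * p = 1 / 2 := by
      rw [hp_def]; field_simp
    have hg : γ ^ (-(1:ℝ)/2) = (γ ^ ((1:ℝ)/2))⁻¹ := by
      rw [neg_div, Real.rpow_neg hγ.le]
    rw [this, Real.div_rpow hδ hγ.le, hg, mul_assoc, div_eq_mul_inv]; ring
  have hpm1 : p - 1 = (α - 1) / (2 - α) := by
    rw [hp_def]; field_simp; ring
  calc x = (x ^ (2 - α)) ^ p := hx_eq.symm
    _ ≤ ((2 * c / μ) * γ⁻¹ + (2 / μ) * (δ / γ) ^ ((2 - α) / 2)) ^ p :=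
        Real.rpow_le_rpow (by positivity) h2 hp_pos.le
    _ ≤ 2 ^ (p - 1) * (((2 * c / μ) * γ⁻¹) ^ p + ((2 / μ) * (δ / γ) ^ ((2 - α) / 2)) ^ p) :=
        real_rpow_add_le_mul_rpow_add_rpow _ _ (by positivity) (by positivity) hp1
    _ = 2 ^ ((α - 1) / (2 - α)) *
        ((2 * c / μ) ^ (1 / (2 - α)) * γ ^ (-(1 / (2 - α))) +
          (2 / μ) ^ (1 / (2 - α)) * δ ^ ((1:ℝ) / 2) * γ ^ (-(1:ℝ) / 2)) := by
        rw [hpm1, hA, hB, hp_def]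
end

section
/- Let F : ℝ^n → ℝ be differentiable with L-Lipschitz gradient, and consider the biased gradient descent x_{t+1} = x_t − η g_t with η ≤ 1/L, where the bias b_t = ∇F(x_t) − g_t satisfies ‖b_t‖ ≤ B for all t. Then (1/T)∑_{t=0}^{T−1} ‖∇F(x_t)‖² ≤ C·(F(x_0) − inf F)/(ηT) + C'·B² for absolute constants C, C' (e.g., C = 8, C' = 10). -/
open RealInnerProductSpace

/-- derivative of `s ↦ F (x + s • v)` -/
lemma hasDerivAt_line {n : ℕ} {F : EuclideanSpace ℝ (Fin n) → ℝ}
    (hdiff : Differentiable ℝ F) (x v : EuclideanSpace ℝ (Fin n)) (s : ℝ) :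
    HasDerivAt (fun s : ℝ => F (x + s • v)) ⟪gradient F (x + s • v), v⟫ s := by
  have hline : HasDerivAt (fun s : ℝ => x + s • v) v s := by
    simpa using ((hasDerivAt_id s).smul_const v).const_add x
  have hF : HasFDerivAt F ((InnerProductSpace.toDual ℝ _) (gradient F (x + s • v)))
      (x + s • v) := ((hdiff (x + s • v)).hasGradientAt).hasFDerivAt
  exact hF.comp_hasDerivAt s hline

/-- descent lemma -/
lemma descent_lemma {n : ℕ} {F : EuclideanSpace ℝ (Fin n) → ℝ} {L : ℝ} (hL : 0 < L)
    (hdiff : Differentiable ℝ F)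
    (hlip : ∀ x y, ‖gradient F x - gradient F y‖ ≤ L * ‖x - y‖)
    (x v : EuclideanSpace ℝ (Fin n)) :
    F (x + v) ≤ F x + ⟪gradient F x, v⟫ + L / 2 * ‖v‖ ^ 2 := by
  set h : ℝ → ℝ := fun s => F (x + s • v) - s * ⟪gradient F x, v⟫ - L / 2 * s ^ 2 * ‖v‖ ^ 2
    with hh
  have hderiv : ∀ s : ℝ, HasDerivAt h
      (⟪gradient F (x + s • v), v⟫ - ⟪gradient F x, v⟫ - L * s * ‖v‖ ^ 2) s := by
    intro s
    have h1 := hasDerivAt_line hdiff x v s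
    have h2 : HasDerivAt (fun s : ℝ => s * ⟪gradient F x, v⟫) ⟪gradient F x, v⟫ s := by
      simpa using (hasDerivAt_id s).mul_const _
    have h3 : HasDerivAt (fun s : ℝ => L / 2 * s ^ 2 * ‖v‖ ^ 2) (L * s * ‖v‖ ^ 2) s := by
      have := ((hasDerivAt_pow 2 s).const_mul (L / 2)).mul_const (‖v‖ ^ 2)
      exact this.congr_deriv (by push_cast; ring)
    have := (h1.sub h2).sub h3
    exact this
  have hanti : AntitoneOn h (Set.Icc (0 : ℝ) 1) := by
    apply antitoneOn_of_deriv_nonpos (convex_Icc 0 1)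
    · exact fun s _ => (hderiv s).continuousAt.continuousWithinAt
    · exact fun s hs => ((hderiv s).differentiableAt).differentiableWithinAt
    · intro s hs
      rw [interior_Icc] at hs
      rw [(hderiv s).deriv]
      have hcs : ⟪gradient F (x + s • v) - gradient F x, v⟫ ≤
          ‖gradient F (x + s • v) - gradient F x‖ * ‖v‖ :=
        real_inner_le_norm _ _
      have hlb : ‖gradient F (x + s • v) - gradient F x‖ ≤ L * (s * ‖v‖) := by
        have := hlip (x + s • v) x
        simpa [norm_smul, abs_of_pos hs.1, mul_assoc] using this
      have : ⟪gradient F (x + s • v), v⟫ - ⟪gradient F x, v⟫ ≤ L * s * ‖v‖ ^ 2 := by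
        rw [← inner_sub_left]
        calc ⟪gradient F (x + s • v) - gradient F x, v⟫
            ≤ ‖gradient F (x + s • v) - gradient F x‖ * ‖v‖ := hcs
          _ ≤ L * (s * ‖v‖) * ‖v‖ := by
              apply mul_le_mul_of_nonneg_right hlb (norm_nonneg _)
          _ = L * s * ‖v‖ ^ 2 := by ring
      linarith
  have := hanti (Set.left_mem_Icc.2 zero_le_one) (Set.right_mem_Icc.2 zero_le_one) zero_le_one
  simp only [hh, one_smul, zero_smul, add_zero, one_pow, one_mul, zero_pow, mul_zero,
    zero_mul, sub_zero, mul_one] at this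
  linarith

theorem biased_gradient_descent (n : ℕ) (F : EuclideanSpace ℝ (Fin n) → ℝ)
    (L η B : ℝ) (hL : 0 < L)
    (hdiff : Differentiable ℝ F)
    (hlip : ∀ x y, ‖gradient F x - gradient F y‖ ≤ L * ‖x - y‖)
    (hbdd : BddBelow (Set.range F))
    (hη : 0 < η) (hηL : η ≤ 1 / L) (hB : 0 ≤ B)
    (x g : ℕ → EuclideanSpace ℝ (Fin n))
    (hupd : ∀ t, x (t + 1) = x t - η • g t)
    (hbias : ∀ t, ‖gradient F (x t) - g t‖ ≤ B) :
    ∀ T : ℕ, 0 < T →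
      (1 / (T : ℝ)) * ∑ t ∈ Finset.range T, ‖gradient F (x t)‖ ^ 2 ≤
        8 * (F (x 0) - sInf (Set.range F)) / (η * T) + 10 * B ^ 2 := by
  have hηL' : η * L ≤ 1 := by
    rw [le_div_iff₀ hL] at hηL
    linarith
  -- per-step inequality
  have hstep : ∀ t, η / 4 * ‖g t‖ ^ 2 ≤ F (x t) - F (x (t + 1)) + η * B ^ 2 := by
    intro t
    have hdesc := descent_lemma hL hdiff hlip (x t) (-(η • g t))
    have hx1 : x (t + 1) = x t + -(η • g t) := by rw [hupd t]; abel
    rw [← hx1] at hdesc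
    have hinner : ⟪gradient F (x t), -(η • g t)⟫ =
        -η * (⟪g t, g t⟫ + ⟪gradient F (x t) - g t, g t⟫) := by
      rw [inner_neg_right, real_inner_smul_right, inner_sub_left]
      ring
    have hgg : ⟪g t, g t⟫ = ‖g t‖ ^ 2 := real_inner_self_eq_norm_sq _
    have hbg : |⟪gradient F (x t) - g t, g t⟫| ≤ B * ‖g t‖ := by
      calc |⟪gradient F (x t) - g t, g t⟫| ≤ ‖gradient F (x t) - g t‖ * ‖g t‖ :=
            abs_real_inner_le_norm _ _
        _ ≤ B * ‖g t‖ := mul_le_mul_of_nonneg_right (hbias t) (norm_nonneg _)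
    have hbg' : -(B * ‖g t‖) ≤ ⟪gradient F (x t) - g t, g t⟫ := neg_le_of_abs_le hbg
    have hnorm : ‖-(η • g t)‖ ^ 2 = η ^ 2 * ‖g t‖ ^ 2 := by
      rw [norm_neg, norm_smul]
      simp [abs_of_pos hη]
      ring
    rw [hinner, hgg, hnorm] at hdesc
    -- AM-GM : B * ‖g t‖ ≤ B^2 + ‖g t‖^2 / 4
    have hamgm : B * ‖g t‖ ≤ B ^ 2 + ‖g t‖ ^ 2 / 4 := by
      nlinarith [sq_nonneg (B - ‖g t‖ / 2)]
    -- L/2 * η^2 ≤ η/2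
    have hq : L / 2 * (η ^ 2 * ‖g t‖ ^ 2) ≤ η / 2 * ‖g t‖ ^ 2 := by
      have h1 : L * η ^ 2 ≤ η := by nlinarith
      nlinarith [sq_nonneg ‖g t‖]
    nlinarith [sq_nonneg ‖g t‖]
  intro T hT
  have hTpos : (0 : ℝ) < T := Nat.cast_pos.2 hT
  -- telescoping sum
  have htel : η / 4 * ∑ t ∈ Finset.range T, ‖g t‖ ^ 2 ≤
      F (x 0) - F (x T) + T * (η * B ^ 2) := by
    have hsum : ∑ t ∈ Finset.range T, (η / 4 * ‖g t‖ ^ 2) ≤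
        ∑ t ∈ Finset.range T, (F (x t) - F (x (t + 1)) + η * B ^ 2) :=
      Finset.sum_le_sum fun t _ => hstep t
    rw [Finset.sum_add_distrib, Finset.sum_range_sub' (fun t => F (x t)),
      Finset.sum_const, Finset.card_range, nsmul_eq_mul] at hsum
    rw [Finset.mul_sum]
    exact hsum
  have hinf_le : sInf (Set.range F) ≤ F (x T) := csInf_le hbdd ⟨x T, rfl⟩
  have hsum_g : ∑ t ∈ Finset.range T, ‖g t‖ ^ 2 ≤
      4 * (F (x 0) - sInf (Set.range F)) / η + 4 * T * B ^ 2 := by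
    have key : η * ∑ t ∈ Finset.range T, ‖g t‖ ^ 2 ≤
        4 * (F (x 0) - sInf (Set.range F)) + η * (4 * T * B ^ 2) := by linarith
    have h5 : ∑ t ∈ Finset.range T, ‖g t‖ ^ 2 ≤
        (4 * (F (x 0) - sInf (Set.range F)) + η * (4 * T * B ^ 2)) / η := by
      rw [le_div_iff₀ hη]
      nlinarith [key]
    calc ∑ t ∈ Finset.range T, ‖g t‖ ^ 2
        ≤ (4 * (F (x 0) - sInf (Set.range F)) + η * (4 * T * B ^ 2)) / η := h5
      _ = 4 * (F (x 0) - sInf (Set.range F)) / η + 4 * T * B ^ 2 := by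
          field_simp
  -- ‖∇F‖² ≤ 2‖g‖² + 2B²
  have hgrad : ∀ t, ‖gradient F (x t)‖ ^ 2 ≤ 2 * ‖g t‖ ^ 2 + 2 * B ^ 2 := by
    intro t
    have h1 : ‖gradient F (x t)‖ ≤ ‖g t‖ + B := by
      calc ‖gradient F (x t)‖ = ‖g t + (gradient F (x t) - g t)‖ := by congr 1; abel
        _ ≤ ‖g t‖ + ‖gradient F (x t) - g t‖ := norm_add_le _ _
        _ ≤ ‖g t‖ + B := by linarith [hbias t]
    nlinarith [norm_nonneg (gradient F (x t)), norm_nonneg (g t), sq_nonneg (‖g t‖ - B)]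
  have hsum_grad : ∑ t ∈ Finset.range T, ‖gradient F (x t)‖ ^ 2 ≤
      8 * (F (x 0) - sInf (Set.range F)) / η + 10 * T * B ^ 2 := by
    calc ∑ t ∈ Finset.range T, ‖gradient F (x t)‖ ^ 2
        ≤ ∑ t ∈ Finset.range T, (2 * ‖g t‖ ^ 2 + 2 * B ^ 2) :=
          Finset.sum_le_sum fun t _ => hgrad t
      _ = 2 * ∑ t ∈ Finset.range T, ‖g t‖ ^ 2 + 2 * T * B ^ 2 := by
          rw [Finset.sum_add_distrib, ← Finset.mul_sum, Finset.sum_const, Finset.card_range,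
            nsmul_eq_mul]
          ring
      _ ≤ 2 * (4 * (F (x 0) - sInf (Set.range F)) / η + 4 * T * B ^ 2) + 2 * T * B ^ 2 := by
          linarith
      _ = 8 * (F (x 0) - sInf (Set.range F)) / η + 10 * T * B ^ 2 := by ring
  rw [one_div, inv_mul_le_iff₀ hTpos]
  calc ∑ t ∈ Finset.range T, ‖gradient F (x t)‖ ^ 2
      ≤ 8 * (F (x 0) - sInf (Set.range F)) / η + 10 * T * B ^ 2 := hsum_grad
    _ = T * (8 * (F (x 0) - sInf (Set.range F)) / (η * T) + 10 * B ^ 2) := by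
        field_simp
end

section
/- Let A be a symmetric positive semidefinite matrix with smallest nonzero eigenvalue at least μ > 0, and E a symmetric perturbation. If rank(A+E) = rank(A) and ‖E‖ < μ, then the Moore–Penrose pseudoinverses satisfy ‖(A+E)† − A†‖ ≤ (1+√5)·max(‖A†‖, ‖(A+E)†‖)²·‖E‖, where ‖·‖ is the operator norm. -/
open ContinuousLinearMap

/-- The four Moore–Penrose conditions for `B` to be a pseudoinverse of `A`. -/
def IsMoorePenroseInverse {n : ℕ}
    (A B : EuclideanSpace ℝ (Fin n) →L[ℝ] EuclideanSpace ℝ (Fin n)) : Prop :=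
  A ∘L B ∘L A = A ∧ B ∘L A ∘L B = B ∧ IsSelfAdjoint (A ∘L B) ∧ IsSelfAdjoint (B ∘L A)

private lemma adjoint_one_clm {n : ℕ} :
    ContinuousLinearMap.adjoint (1 : EuclideanSpace ℝ (Fin n) →L[ℝ] EuclideanSpace ℝ (Fin n)) = 1 := by
  rw [ContinuousLinearMap.one_def, ContinuousLinearMap.adjoint_id]

/-- A self-adjoint idempotent has operator norm at most 1. -/
private lemma proj_norm_le_one {n : ℕ}
    (P : EuclideanSpace ℝ (Fin n) →L[ℝ] EuclideanSpace ℝ (Fin n))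
    (hP : ContinuousLinearMap.adjoint P = P) (hP2 : P * P = P) : ‖P‖ ≤ 1 := by
  refine opNorm_le_bound P zero_le_one (fun x => ?_)
  rw [one_mul]
  have h1 : ‖P x‖ ^ 2 = inner ℝ (P x) (P x) := (real_inner_self_eq_norm_sq (P x)).symm
  have h2 := adjoint_inner_left P x (P x)
  rw [hP] at h2
  have h3 : P (P x) = P x := by
    have := congrArg (fun T => T x) hP2
    simpa using this
  have h4 : (inner ℝ x (P x) : ℝ) ≤ ‖x‖ * ‖P x‖ := real_inner_le_norm x (P x)
  have h5 : ‖P x‖ ^ 2 ≤ ‖x‖ * ‖P x‖ := by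
    rw [h1, ← h2, h3, real_inner_comm]; exact h4
  rcases eq_or_lt_of_le (norm_nonneg (P x)) with h | h
  · rw [← h]; exact norm_nonneg x
  · nlinarith

private lemma proj_bound_right {n : ℕ}
    (A A' : EuclideanSpace ℝ (Fin n) →L[ℝ] EuclideanSpace ℝ (Fin n))
    (ha1 : A * A' * A = A)
    (ha3 : ContinuousLinearMap.adjoint (A * A') = A * A') :
    ‖(1 : EuclideanSpace ℝ (Fin n) →L[ℝ] EuclideanSpace ℝ (Fin n)) - A * A'‖ ≤ 1 := by
  apply proj_norm_le_one
  · rw [map_sub, ha3, adjoint_one_clm]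
  · have hPP : (A * A') * (A * A') = A * A' := by
      rw [← mul_assoc (A * A') A A', ha1]
    rw [sub_mul, one_mul, mul_sub, mul_one, hPP, sub_self, sub_zero]

private lemma proj_bound_left {n : ℕ}
    (B B' : EuclideanSpace ℝ (Fin n) →L[ℝ] EuclideanSpace ℝ (Fin n))
    (hb1 : B * B' * B = B)
    (hb4 : ContinuousLinearMap.adjoint (B' * B) = B' * B) :
    ‖(1 : EuclideanSpace ℝ (Fin n) →L[ℝ] EuclideanSpace ℝ (Fin n)) - B' * B‖ ≤ 1 := by
  apply proj_norm_le_one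
  · rw [map_sub, hb4, adjoint_one_clm]
  · have hPP : (B' * B) * (B' * B) = B' * B := by
      rw [mul_assoc B' B (B' * B), ← mul_assoc B B' B, hb1]
    rw [sub_mul, one_mul, mul_sub, mul_one, hPP, sub_self, sub_zero]

private lemma wedin_key_identity {n : ℕ}
    (A B E A' B' : EuclideanSpace ℝ (Fin n) →L[ℝ] EuclideanSpace ℝ (Fin n))
    (hE : E = B - A)
    (ha1 : A * A' * A = A) (ha2 : A' * A * A' = A')
    (ha3 : ContinuousLinearMap.adjoint (A * A') = A * A')
    (ha4 : ContinuousLinearMap.adjoint (A' * A) = A' * A)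
    (hb1 : B * B' * B = B) (hb2 : B' * B * B' = B')
    (hb3 : ContinuousLinearMap.adjoint (B * B') = B * B')
    (hb4 : ContinuousLinearMap.adjoint (B' * B) = B' * B) :
    B' - A' = -(B' * E * A')
      + B' * ContinuousLinearMap.adjoint B' * ContinuousLinearMap.adjoint E * (1 - A * A')
      + (1 - B' * B) * ContinuousLinearMap.adjoint E * (ContinuousLinearMap.adjoint A' * A') := by
  have adj_mul : ∀ (X Y : EuclideanSpace ℝ (Fin n) →L[ℝ] EuclideanSpace ℝ (Fin n)),
      ContinuousLinearMap.adjoint (X * Y)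
        = ContinuousLinearMap.adjoint Y * ContinuousLinearMap.adjoint X :=
    fun X Y => ContinuousLinearMap.adjoint_comp X Y
  set aA := ContinuousLinearMap.adjoint A with haA
  set aB := ContinuousLinearMap.adjoint B with haB
  set aA' := ContinuousLinearMap.adjoint A' with haA'
  set aB' := ContinuousLinearMap.adjoint B' with haB'
  have d1 : B' * aB' * aB = B' := by
    have h : aB' * aB = B * B' := by rw [haB', haB, ← adj_mul, hb3]
    calc B' * aB' * aB = B' * (aB' * aB) := mul_assoc _ _ _
      _ = B' * (B * B') := by rw [h]
      _ = B' * B * B' := (mul_assoc _ _ _).symm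
      _ = B' := hb2
  have d2 : aA * (1 - A * A') = 0 := by
    have h : aA * (A * A') = aA := by
      calc aA * (A * A') = aA * ContinuousLinearMap.adjoint (A * A') := by rw [ha3]
        _ = ContinuousLinearMap.adjoint ((A * A') * A) := by rw [adj_mul (A * A') A]
        _ = aA := by rw [ha1]
    calc aA * (1 - A * A') = aA - aA * (A * A') := by rw [mul_sub, mul_one]
      _ = aA - aA := by rw [h]
      _ = 0 := sub_self _
  have d3 : (1 - B' * B) * aB = 0 := by
    have h : (B' * B) * aB = aB := by
      calc (B' * B) * aB = ContinuousLinearMap.adjoint (B' * B) * aB := by rw [hb4]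
        _ = ContinuousLinearMap.adjoint (B * (B' * B)) := by rw [adj_mul B (B' * B)]
        _ = ContinuousLinearMap.adjoint (B * B' * B) := by rw [mul_assoc]
        _ = aB := by rw [hb1]
    calc (1 - B' * B) * aB = aB - (B' * B) * aB := by rw [sub_mul, one_mul]
      _ = aB - aB := by rw [h]
      _ = 0 := sub_self _
  have d4 : aA * aA' * A' = A' := by
    calc aA * aA' * A' = ContinuousLinearMap.adjoint (A' * A) * A' := by rw [adj_mul A' A]
      _ = (A' * A) * A' := by rw [ha4]
      _ = A' := ha2
  have aE : ContinuousLinearMap.adjoint E = aB - aA := by rw [hE, map_sub]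
  have e0 : -(B' * (B - A) * A') = B' * (A * A') - B' * B * A' := by
    rw [mul_sub B' B A, sub_mul (B' * B) (B' * A) A', neg_sub, mul_assoc B' A A']
  have e1 : B' * aB' * (aB - aA) * (1 - A * A') = B' - B' * (A * A') := by
    have h : B' * aB' * (aB - aA) * (1 - A * A')
        = (B' * aB' * aB) * (1 - A * A') - B' * aB' * (aA * (1 - A * A')) := by
      rw [mul_sub (B' * aB') aB aA,
        sub_mul (B' * aB' * aB) (B' * aB' * aA) (1 - A * A'),
        mul_assoc (B' * aB') aA (1 - A * A')]
    rw [h, d1, d2, mul_zero, sub_zero, mul_sub, mul_one]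
  have e2 : (1 - B' * B) * (aB - aA) * (aA' * A') = B' * B * A' - A' := by
    have h : (1 - B' * B) * (aB - aA) * (aA' * A')
        = ((1 - B' * B) * aB) * (aA' * A') - (1 - B' * B) * (aA * aA' * A') := by
      rw [mul_sub (1 - B' * B) aB aA,
        sub_mul ((1 - B' * B) * aB) ((1 - B' * B) * aA) (aA' * A'),
        mul_assoc (1 - B' * B) aA (aA' * A'), ← mul_assoc aA aA' A']
    rw [h, d3, d4, zero_mul, zero_sub, sub_mul, one_mul, neg_sub]
  rw [aE, hE, e0, e1, e2]
  abel

private lemma wedin_norm_bound {n : ℕ}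
    (A B E A' B' : EuclideanSpace ℝ (Fin n) →L[ℝ] EuclideanSpace ℝ (Fin n))
    (key : B' - A' = -(B' * E * A')
      + B' * ContinuousLinearMap.adjoint B' * ContinuousLinearMap.adjoint E * (1 - A * A')
      + (1 - B' * B) * ContinuousLinearMap.adjoint E * (ContinuousLinearMap.adjoint A' * A'))
    (hPa : ‖(1 : EuclideanSpace ℝ (Fin n) →L[ℝ] EuclideanSpace ℝ (Fin n)) - A * A'‖ ≤ 1)
    (hPb : ‖(1 : EuclideanSpace ℝ (Fin n) →L[ℝ] EuclideanSpace ℝ (Fin n)) - B' * B‖ ≤ 1) :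
    ‖B' - A'‖ ≤ 3 * (max ‖A'‖ ‖B'‖) ^ 2 * ‖E‖ := by
  set aA' := ContinuousLinearMap.adjoint A' with haA'
  set aB' := ContinuousLinearMap.adjoint B' with haB'
  set aE := ContinuousLinearMap.adjoint E with haE
  set m := max ‖A'‖ ‖B'‖ with hm
  have hmA : ‖A'‖ ≤ m := le_max_left _ _
  have hmB : ‖B'‖ ≤ m := le_max_right _ _
  have hm0 : 0 ≤ m := le_trans (norm_nonneg _) hmA
  have hE0 : (0:ℝ) ≤ ‖E‖ := norm_nonneg _
  have naB' : ‖aB'‖ = ‖B'‖ := LinearIsometryEquiv.norm_map ContinuousLinearMap.adjoint B'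
  have naA' : ‖aA'‖ = ‖A'‖ := LinearIsometryEquiv.norm_map ContinuousLinearMap.adjoint A'
  have naE : ‖aE‖ = ‖E‖ := LinearIsometryEquiv.norm_map ContinuousLinearMap.adjoint E
  have t1 : ‖B' * E * A'‖ ≤ m * ‖E‖ * m := by
    calc ‖B' * E * A'‖ ≤ ‖B' * E‖ * ‖A'‖ := opNorm_comp_le _ _
      _ ≤ ‖B'‖ * ‖E‖ * ‖A'‖ :=
          mul_le_mul_of_nonneg_right (opNorm_comp_le _ _) (norm_nonneg _)
      _ ≤ m * ‖E‖ * m :=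
          mul_le_mul (mul_le_mul hmB le_rfl hE0 hm0) hmA (norm_nonneg _) (by positivity)
  have t2 : ‖B' * aB' * aE * (1 - A * A')‖ ≤ m * m * ‖E‖ := by
    calc ‖B' * aB' * aE * (1 - A * A')‖
        ≤ ‖B' * aB' * aE‖
          * ‖(1 : EuclideanSpace ℝ (Fin n) →L[ℝ] EuclideanSpace ℝ (Fin n)) - A * A'‖ :=
          opNorm_comp_le _ _
      _ ≤ ‖B' * aB' * aE‖ * 1 := mul_le_mul_of_nonneg_left hPa (norm_nonneg _)
      _ = ‖B' * aB' * aE‖ := mul_one _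
      _ ≤ ‖B' * aB'‖ * ‖aE‖ := opNorm_comp_le _ _
      _ ≤ ‖B'‖ * ‖aB'‖ * ‖E‖ := by
          rw [naE]; exact mul_le_mul_of_nonneg_right (opNorm_comp_le _ _) hE0
      _ ≤ m * m * ‖E‖ := by
          rw [naB']
          exact mul_le_mul_of_nonneg_right (mul_le_mul hmB hmB (norm_nonneg _) hm0) hE0
  have t3 : ‖(1 - B' * B) * aE * (aA' * A')‖ ≤ ‖E‖ * (m * m) := by
    calc ‖(1 - B' * B) * aE * (aA' * A')‖
        ≤ ‖(1 - B' * B) * aE‖ * ‖aA' * A'‖ := opNorm_comp_le _ _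
      _ ≤ (‖(1 : EuclideanSpace ℝ (Fin n) →L[ℝ] EuclideanSpace ℝ (Fin n)) - B' * B‖
            * ‖aE‖) * (‖aA'‖ * ‖A'‖) :=
          mul_le_mul (opNorm_comp_le _ _) (opNorm_comp_le _ _) (norm_nonneg _) (by positivity)
      _ ≤ (1 * ‖E‖) * (m * m) := by
          rw [naE, naA']
          exact mul_le_mul (mul_le_mul_of_nonneg_right hPb hE0)
            (mul_le_mul hmA hmA (norm_nonneg _) hm0) (by positivity) (by positivity)
      _ = ‖E‖ * (m * m) := by ring
  rw [key]
  calc ‖-(B' * E * A') + B' * aB' * aE * (1 - A * A') + (1 - B' * B) * aE * (aA' * A')‖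
      ≤ ‖-(B' * E * A') + B' * aB' * aE * (1 - A * A')‖
        + ‖(1 - B' * B) * aE * (aA' * A')‖ := norm_add_le _ _
    _ ≤ (‖-(B' * E * A')‖ + ‖B' * aB' * aE * (1 - A * A')‖)
        + ‖(1 - B' * B) * aE * (aA' * A')‖ := by
        gcongr; exact norm_add_le _ _
    _ ≤ (m * ‖E‖ * m + m * m * ‖E‖) + ‖E‖ * (m * m) := by
        rw [norm_neg]; gcongr
    _ = 3 * m ^ 2 * ‖E‖ := by ring

theorem wedin_pseudoinverse_perturbation (n : ℕ)
    (A E : EuclideanSpace ℝ (Fin n) →L[ℝ] EuclideanSpace ℝ (Fin n))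
    (μ : ℝ) (hμ : 0 < μ)
    (hAsym : IsSelfAdjoint A) (hEsym : IsSelfAdjoint E)
    (hApsd : ∀ x, 0 ≤ (inner ℝ x (A x) : ℝ))
    (heig : ∀ x ∈ (LinearMap.ker (A : EuclideanSpace ℝ (Fin n) →ₗ[ℝ] EuclideanSpace ℝ (Fin n)))ᗮ, μ * ‖x‖ ≤ ‖A x‖)
    (hrank : LinearMap.rank ((A + E : EuclideanSpace ℝ (Fin n) →L[ℝ] EuclideanSpace ℝ (Fin n)) :
        EuclideanSpace ℝ (Fin n) →ₗ[ℝ] EuclideanSpace ℝ (Fin n)) =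
      LinearMap.rank (A : EuclideanSpace ℝ (Fin n) →ₗ[ℝ] EuclideanSpace ℝ (Fin n)))
    (hEsmall : ‖E‖ < μ)
    (A' B' : EuclideanSpace ℝ (Fin n) →L[ℝ] EuclideanSpace ℝ (Fin n))
    (hA' : IsMoorePenroseInverse A A') (hB' : IsMoorePenroseInverse (A + E) B') :
    ‖B' - A'‖ ≤ (1 + Real.sqrt 5) * (max ‖A'‖ ‖B'‖) ^ 2 * ‖E‖ := by
  obtain ⟨B, hB⟩ : ∃ X : EuclideanSpace ℝ (Fin n) →L[ℝ] EuclideanSpace ℝ (Fin n),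
      X = A + E := ⟨_, rfl⟩
  obtain ⟨ha1', ha2', ha3', ha4'⟩ := hA'
  obtain ⟨hb1', hb2', hb3', hb4'⟩ := hB'
  rw [← hB] at hb1' hb2' hb3' hb4'
  have ha1 : A * A' * A = A := by
    rw [mul_assoc, ContinuousLinearMap.mul_def, ContinuousLinearMap.mul_def]; exact ha1'
  have ha2 : A' * A * A' = A' := by
    rw [mul_assoc, ContinuousLinearMap.mul_def, ContinuousLinearMap.mul_def]; exact ha2'
  have hb1 : B * B' * B = B := by
    rw [mul_assoc, ContinuousLinearMap.mul_def, ContinuousLinearMap.mul_def]; exact hb1'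
  have hb2 : B' * B * B' = B' := by
    rw [mul_assoc, ContinuousLinearMap.mul_def, ContinuousLinearMap.mul_def]; exact hb2'
  have ha3 : ContinuousLinearMap.adjoint (A * A') = A * A' := by
    rw [← ContinuousLinearMap.isSelfAdjoint_iff', ContinuousLinearMap.mul_def]; exact ha3'
  have ha4 : ContinuousLinearMap.adjoint (A' * A) = A' * A := by
    rw [← ContinuousLinearMap.isSelfAdjoint_iff', ContinuousLinearMap.mul_def]; exact ha4'
  have hb3 : ContinuousLinearMap.adjoint (B * B') = B * B' := by
    rw [← ContinuousLinearMap.isSelfAdjoint_iff', ContinuousLinearMap.mul_def]; exact hb3'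
  have hb4 : ContinuousLinearMap.adjoint (B' * B) = B' * B := by
    rw [← ContinuousLinearMap.isSelfAdjoint_iff', ContinuousLinearMap.mul_def]; exact hb4'
  have hE : E = B - A := by rw [hB]; abel
  have key := wedin_key_identity A B E A' B' hE ha1 ha2 ha3 ha4 hb1 hb2 hb3 hb4
  have hPa := proj_bound_right A A' ha1 ha3
  have hPb := proj_bound_left B B' hb1 hb4
  have hsum := wedin_norm_bound A B E A' B' key hPa hPb
  have hsqrt : (2:ℝ) ≤ Real.sqrt 5 := by
    nlinarith [Real.sq_sqrt (by norm_num : (0:ℝ) ≤ 5), Real.sqrt_nonneg 5]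
  have hm0 : 0 ≤ max ‖A'‖ ‖B'‖ := le_trans (norm_nonneg _) (le_max_left _ _)
  have hE0 : (0:ℝ) ≤ ‖E‖ := norm_nonneg _
  calc ‖B' - A'‖ ≤ 3 * (max ‖A'‖ ‖B'‖) ^ 2 * ‖E‖ := hsum
    _ ≤ (1 + Real.sqrt 5) * (max ‖A'‖ ‖B'‖) ^ 2 * ‖E‖ :=
        mul_le_mul_of_nonneg_right
          (mul_le_mul_of_nonneg_right (by linarith : (3:ℝ) ≤ 1 + Real.sqrt 5)
            (sq_nonneg (max ‖A'‖ ‖B'‖))) hE0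
end
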